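/- For each integer $m\ge 2$, let $(L^{(m)}_n(x))_{n\ge 0}$ be the sequence of real polynomials defined by $L^{(m)}_0(x)=1$, $L^{(m)}_1(x)=(m-1)x+1$, and $L^{(m)}_n(x)=\left[(m-2)x+1\right]L^{(m)}_{n-1}(x)+x\,L^{(m)}_{n-2}(x)$ for $n\ge 2$. Let $Z=\{x\in\mathbb{R} : L^{(m)}_n(x)=0\text{ for some }m\ge 2,\ n\ge 1\}$. Then the closure of $Z$ in $\mathbb{R}$ contains the interval $(-\infty,0]$; i.e., the real zeros of the family $\{L^{(m)}_n : m\ge 2,\ n\ge 1\}$ are dense in $(-\infty,0]$. -/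

import Mathlib

open Polynomial

/-- The sextet polynomials of the hexagonal chains `L^{(m)}_n`. -/
noncomputable def sextetL (m : ℕ) : ℕ → Polynomial ℝ
  | 0 => 1
  | 1 => C ((m : ℝ) - 1) * X + 1
  | (n + 2) => (C ((m : ℝ) - 2) * X + 1) * sextetL m (n + 1) + X * sextetL m n

lemma sextetL_eval (a : ℕ) (s θ B : ℝ) (hs : 0 < s)
    (hc : 2 * Real.sqrt s * Real.cos θ = 1 - a * s)
    (hB : B * (2 * Real.sqrt s * Real.sin θ) = 1 - ((a : ℝ) + 2) * s) :
    ∀ n : ℕ, (sextetL (a+2) n).eval (-s) =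
      (Real.sqrt s)^n * (Real.cos (n*θ) + B * Real.sin (n*θ)) := by
  have hsq : Real.sqrt s ^ 2 = s := Real.sq_sqrt hs.le
  intro n
  induction n using Nat.twoStepInduction with
  | zero => simp [sextetL]
  | one =>
    simp only [sextetL, eval_add, eval_mul, eval_C, eval_X, eval_one, Nat.cast_one, one_mul]
    push_cast
    nlinarith [hc, hB]
  | more n ih2 ih1 =>
    have e1 : ((n:ℝ)+2)*θ = ((n:ℝ)+1)*θ + θ := by ring
    have e2 : (n:ℝ)*θ = ((n:ℝ)+1)*θ - θ := by ring
    simp only [sextetL, eval_add, eval_mul, eval_C, eval_X, eval_one]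
    rw [ih1, ih2]
    push_cast
    rw [e1, e2, Real.cos_add, Real.sin_add, Real.cos_sub, Real.sin_sub]
    have hca : ((a:ℝ)+2) - 2 = a := by ring
    linear_combination (Real.sqrt s ^ n *
        (Real.cos ((↑n+1)*θ) * Real.cos θ + Real.sin ((↑n+1)*θ) * Real.sin θ +
          B * (Real.sin ((↑n+1)*θ) * Real.cos θ - Real.cos ((↑n+1)*θ) * Real.sin θ))) * hsq
      - (Real.sqrt s ^ (n+1) * (Real.cos ((↑n+1)*θ) + B * Real.sin ((↑n+1)*θ))) * hc

set_option maxHeartbeats 1000000 in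
lemma exists_zero_near (a : ℕ) (s₀ s₁ : ℝ) (h0 : 0 < s₀) (h01 : s₀ < s₁)
    (hr0 : (1 - a*s₀)^2 < 4*s₀) (hr1 : (1 - a*s₁)^2 < 4*s₁) :
    ∃ z ∈ Set.Icc (-s₁) (-s₀), ∃ n : ℕ, 1 ≤ n ∧ (sextetL (a+2) n).eval z = 0 := by
  set g : ℝ → ℝ := fun s => (1 - a*s)/(2*Real.sqrt s) with hg_def
  set θf : ℝ → ℝ := fun s => Real.arccos (g s) with hθ_def
  -- basic facts on the interval
  have hpos : ∀ s ∈ Set.Icc s₀ s₁, 0 < s := fun s hs => h0.trans_le hs.1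
  have hreg : ∀ s ∈ Set.Icc s₀ s₁, (1 - a*s)^2 < 4*s := by
    intro s hs
    rcases hs.1.eq_or_lt with rfl | hlt
    · exact hr0
    · nlinarith [mul_pos (sub_pos.2 hlt) (show (0:ℝ) < 4*s₁ - (1 - a*s₁)^2 by linarith),
        mul_nonneg (sub_nonneg.2 hs.2) (show (0:ℝ) ≤ 4*s₀ - (1 - a*s₀)^2 by linarith),
        mul_nonneg (mul_nonneg (sub_nonneg.2 hs.1) (sub_nonneg.2 hs.2)) (sq_nonneg (a:ℝ)),
        sub_pos.2 h01]
  have hsqrt : ∀ s ∈ Set.Icc s₀ s₁, 0 < Real.sqrt s := fun s hs => Real.sqrt_pos.2 (hpos s hs)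
  have hgsq : ∀ s ∈ Set.Icc s₀ s₁, (g s)^2 < 1 := by
    intro s hs
    have hsp := hsqrt s hs
    have h4 : (2*Real.sqrt s)^2 = 4*s := by
      have := Real.sq_sqrt (hpos s hs).le; nlinarith
    have hd : (0:ℝ) < (2*Real.sqrt s)^2 := by positivity
    rw [hg_def]
    simp only [div_pow]
    rw [div_lt_one hd, h4]
    exact hreg s hs
  have hgabs : ∀ s ∈ Set.Icc s₀ s₁, -1 < g s ∧ g s < 1 := by
    intro s hs
    have := abs_lt.1 ((sq_lt_one_iff_abs_lt_one (g s)).1 (hgsq s hs))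
    exact this
  have hcosθ : ∀ s ∈ Set.Icc s₀ s₁, Real.cos (θf s) = g s := fun s hs =>
    Real.cos_arccos (hgabs s hs).1.le (hgabs s hs).2.le
  have hsinθ : ∀ s ∈ Set.Icc s₀ s₁, 0 < Real.sin (θf s) := by
    intro s hs
    rw [hθ_def]
    simp only
    rw [Real.sin_arccos]
    exact Real.sqrt_pos.2 (by nlinarith [hgsq s hs])
  -- continuity
  have hgc : ContinuousOn g (Set.Icc s₀ s₁) := by
    apply ContinuousOn.div
    · fun_prop
    · fun_prop
    · exact fun s hs => by have := hsqrt s hs; positivity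
  have hθc : ContinuousOn θf (Set.Icc s₀ s₁) :=
    Real.continuous_arccos.comp_continuousOn hgc
  -- strict increase
  have hmem0 : s₀ ∈ Set.Icc s₀ s₁ := ⟨le_refl _, h01.le⟩
  have hmem1 : s₁ ∈ Set.Icc s₀ s₁ := ⟨h01.le, le_refl _⟩
  have hglt : g s₁ < g s₀ := by
    rw [hg_def]
    simp only
    have hu0 : 0 < Real.sqrt s₀ := Real.sqrt_pos.2 h0
    have hv0 : 0 < Real.sqrt s₁ := Real.sqrt_pos.2 (h0.trans h01)
    rw [div_lt_div_iff₀ (by positivity) (by positivity)]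
    have huv : Real.sqrt s₀ < Real.sqrt s₁ := Real.sqrt_lt_sqrt h0.le h01
    have e1 : (a:ℝ) * s₁ * Real.sqrt s₀ = (a:ℝ) * (Real.sqrt s₁ * Real.sqrt s₁) * Real.sqrt s₀ := by
      rw [Real.mul_self_sqrt (h0.trans h01).le]
    have e2 : (a:ℝ) * s₀ * Real.sqrt s₁ = (a:ℝ) * (Real.sqrt s₀ * Real.sqrt s₀) * Real.sqrt s₁ := by
      rw [Real.mul_self_sqrt h0.le]
    have hkey : 0 < (Real.sqrt s₁ - Real.sqrt s₀) * (1 + (a:ℝ) * (Real.sqrt s₀ * Real.sqrt s₁)) :=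
      mul_pos (sub_pos.2 huv) (by positivity)
    nlinarith [e1, e2, hkey]
  have hθlt : θf s₀ < θf s₁ :=
    Real.strictAntiOn_arccos ⟨(hgabs s₁ hmem1).1.le, (hgabs s₁ hmem1).2.le⟩
      ⟨(hgabs s₀ hmem0).1.le, (hgabs s₀ hmem0).2.le⟩ hglt
  have hθ0pos : 0 < θf s₀ := Real.arccos_pos.2 (hgabs s₀ hmem0).2
  set δ := θf s₁ - θf s₀ with hδ_def
  have hδpos : 0 < δ := sub_pos.2 hθlt
  obtain ⟨n, hn⟩ := exists_nat_gt (3*Real.pi/δ)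
  have hπ := Real.pi_pos
  have hn3 : 3*Real.pi < n*δ := by
    rw [div_lt_iff₀ hδpos] at hn; linarith
  have hn0 : 0 < n := by
    by_contra h
    push_neg at h
    interval_cases n
    simp at hn3; nlinarith
  have hn0R : (0:ℝ) < n := Nat.cast_pos.2 hn0
  set k := ⌈(n * θf s₀)/Real.pi⌉₊ with hk_def
  have hk1 : n * θf s₀ ≤ k * Real.pi := by
    rw [← div_le_iff₀ hπ]; exact Nat.le_ceil _
  have hk2 : (k:ℝ) * Real.pi < n * θf s₀ + Real.pi := by
    have := Nat.ceil_lt_add_one (a := (n * θf s₀)/Real.pi)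
      (by positivity)
    rw [← hk_def] at this
    calc (k:ℝ) * Real.pi < ((n * θf s₀)/Real.pi + 1) * Real.pi := by
          exact mul_lt_mul_of_pos_right this hπ
      _ = n * θf s₀ + Real.pi := by field_simp
  -- the two sign points
  have key : ∀ k' : ℕ, (n:ℝ) * θf s₀ ≤ k' * Real.pi → (k':ℝ) * Real.pi ≤ n * θf s₁ →
      ∃ s' ∈ Set.Icc s₀ s₁, (sextetL (a+2) n).eval (-s') = (Real.sqrt s')^n * (-1)^k' := by
    intro k' hlo hhi
    have hmem : (k':ℝ) * Real.pi / n ∈ Set.Icc (θf s₀) (θf s₁) := by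
      constructor
      · rw [le_div_iff₀ hn0R]; linarith
      · rw [div_le_iff₀ hn0R]; linarith
    obtain ⟨s', hs', hθs'⟩ := intermediate_value_Icc h01.le hθc hmem
    refine ⟨s', hs', ?_⟩
    have hsin := hsinθ s' hs'
    have hcos := hcosθ s' hs'
    have hsp := hsqrt s' hs'
    have hc : 2 * Real.sqrt s' * Real.cos (θf s') = 1 - a * s' := by
      rw [hcos, hg_def]
      field_simp
    set B := (1 - ((a:ℝ)+2)*s')/(2*Real.sqrt s'*Real.sin (θf s')) with hB_def
    have hB : B * (2 * Real.sqrt s' * Real.sin (θf s')) = 1 - ((a:ℝ) + 2) * s' := by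
      rw [hB_def]
      field_simp
    have := sextetL_eval a s' (θf s') B (hpos s' hs') hc hB n
    rw [this, hθs']
    have hnθ : (n:ℝ) * ((k':ℝ) * Real.pi / n) = k' * Real.pi := by
      field_simp
    rw [hnθ, Real.sin_nat_mul_pi, mul_zero, add_zero]
    congr 1
    have := Real.cos_nat_mul_pi_sub 0 k'
    simpa using this
  obtain ⟨s', hs', hev'⟩ := key k hk1 (by nlinarith)
  obtain ⟨s'', hs'', hev''⟩ := key (k+1) (by push_cast; nlinarith) (by push_cast; nlinarith)
  -- opposite signs
  have hA : 0 < (Real.sqrt s')^n := pow_pos (hsqrt s' hs') n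
  have hA' : 0 < (Real.sqrt s'')^n := pow_pos (hsqrt s'' hs'') n
  set P : ℝ → ℝ := fun x => (sextetL (a+2) n).eval x with hP_def
  have hPc : Continuous P := by
    rw [hP_def]; exact Polynomial.continuous _
  have hprod : P (-s') * P (-s'') < 0 := by
    have hodd : ((-1:ℝ))^(k+(k+1)) = -1 := Odd.neg_one_pow ⟨k, by ring⟩
    have hcalc : P (-s') * P (-s'') = -((Real.sqrt s')^n * (Real.sqrt s'')^n) := by
      show ((sextetL (a+2) n).eval (-s')) * ((sextetL (a+2) n).eval (-s'')) = _
      rw [hev', hev'']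
      calc (Real.sqrt s')^n * (-1:ℝ)^k * ((Real.sqrt s'')^n * (-1:ℝ)^(k+1))
          = (Real.sqrt s')^n * (Real.sqrt s'')^n * ((-1:ℝ)^(k+(k+1))) := by
            rw [pow_add]; ring
        _ = -((Real.sqrt s')^n * (Real.sqrt s'')^n) := by rw [hodd]; ring
    rw [hcalc]
    linarith [mul_pos hA hA']
  have h0mem : (0:ℝ) ∈ Set.uIcc (P (-s')) (P (-s'')) := by
    rcases mul_neg_iff.1 hprod with ⟨h1, h2⟩ | ⟨h1, h2⟩
    · exact Set.mem_uIcc.2 (Or.inr ⟨h2.le, h1.le⟩)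
    · exact Set.mem_uIcc.2 (Or.inl ⟨h1.le, h2.le⟩)
  obtain ⟨z, hz, hz0⟩ := intermediate_value_uIcc hPc.continuousOn h0mem
  refine ⟨z, ?_, n, hn0, hz0⟩
  have hsub : Set.uIcc (-s') (-s'') ⊆ Set.Icc (-s₁) (-s₀) := by
    rw [← Set.uIcc_of_le (by linarith [h01] : -s₁ ≤ -s₀)]
    apply Set.uIcc_subset_uIcc
    · rw [Set.uIcc_of_le (by linarith [h01] : -s₁ ≤ -s₀)]
      exact ⟨by linarith [hs'.2], by linarith [hs'.1]⟩
    · rw [Set.uIcc_of_le (by linarith [h01] : -s₁ ≤ -s₀)]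
      exact ⟨by linarith [hs''.2], by linarith [hs''.1]⟩
  exact hsub hz

theorem sextet_zeros_dense :
    Set.Iic (0 : ℝ) ⊆
      closure {x : ℝ | ∃ m : ℕ, 2 ≤ m ∧ ∃ n : ℕ, 1 ≤ n ∧ (sextetL m n).eval x = 0} := by
  set Z := {x : ℝ | ∃ m : ℕ, 2 ≤ m ∧ ∃ n : ℕ, 1 ≤ n ∧ (sextetL m n).eval x = 0} with hZ
  have hope : Set.Iio (0:ℝ) ⊆ closure Z := by
    intro y hy
    rw [Metric.mem_closure_iff]
    intro ε hε
    have hs₀pos : 0 < -y := by simpa using hy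
    set s₀ := -y with hs₀def
    obtain ⟨aN, s₁, h01, hr0, hr1, hclose⟩ :
        ∃ (aN : ℕ) (s₁ : ℝ), s₀ < s₁ ∧ (1 - aN*s₀)^2 < 4*s₀ ∧ (1 - aN*s₁)^2 < 4*s₁ ∧
          s₁ - s₀ < ε := by
      rcases le_or_gt s₀ (1/4) with hcase | hcase
      · set t := min (ε/2) (s₀^2) with ht_def
        have ht1 : 0 < t := lt_min (by linarith) (by positivity)
        have ht2 : t ≤ s₀^2 := min_le_right _ _
        have ht3 : t ≤ ε/2 := min_le_left _ _
        have ha1 : 1 ≤ (⌈1/s₀⌉₊ : ℝ) * s₀ := by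
          have := Nat.le_ceil (1/s₀)
          rw [div_le_iff₀ hs₀pos] at this
          linarith [this]
        have ha2 : (⌈1/s₀⌉₊ : ℝ) * s₀ < 1 + s₀ := by
          have h := Nat.ceil_lt_add_one (a := 1/s₀) (by positivity)
          have h2 := mul_lt_mul_of_pos_right h hs₀pos
          have h3 : (1/s₀ + 1) * s₀ = 1 + s₀ := by field_simp
          linarith
        have hAt : (⌈1/s₀⌉₊ : ℝ) * t ≤ s₀ + s₀^2 := by
          have h1 : (⌈1/s₀⌉₊ : ℝ) * t ≤ (⌈1/s₀⌉₊ : ℝ) * s₀^2 := by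
            exact mul_le_mul_of_nonneg_left ht2 (Nat.cast_nonneg _)
          have h2 : (⌈1/s₀⌉₊ : ℝ) * s₀^2 ≤ (1/s₀ + 1) * s₀^2 := by
            have := Nat.ceil_lt_add_one (a := 1/s₀) (by positivity)
            nlinarith [sq_nonneg s₀, hs₀pos]
          have h3 : (1/s₀ + 1) * s₀^2 = s₀ + s₀^2 := by field_simp
          linarith
        refine ⟨⌈1/s₀⌉₊, s₀ + t, by linarith, ?_, ?_, by linarith⟩
        · nlinarith [ha1, ha2, hs₀pos, hcase]
        · have hct : 0 ≤ (⌈1/s₀⌉₊ : ℝ) * t :=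
            mul_nonneg (Nat.cast_nonneg _) ht1.le
          have hw : (⌈1/s₀⌉₊ : ℝ)*(s₀+t) = (⌈1/s₀⌉₊ : ℝ)*s₀ + (⌈1/s₀⌉₊ : ℝ)*t := by ring
          have hw1 : 1 ≤ (⌈1/s₀⌉₊ : ℝ)*(s₀+t) := by rw [hw]; linarith
          have hw2 : (⌈1/s₀⌉₊ : ℝ)*(s₀+t) ≤ 1 + 3*s₀ := by
            rw [hw]; nlinarith [hs₀pos, hcase]
          nlinarith [hw1, hw2, hs₀pos, hcase, ht1]
      · refine ⟨0, s₀ + min (ε/2) 1, by simp; positivity, ?_, ?_, ?_⟩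
        · norm_num; linarith
        · have : (0:ℝ) < min (ε/2) 1 := lt_min (by linarith) one_pos
          norm_num; linarith
        · have := min_le_left (ε/2) (1:ℝ); linarith
    obtain ⟨z, hz, n, hn, hzev⟩ := exists_zero_near aN s₀ s₁ hs₀pos h01 hr0 hr1
    refine ⟨z, ⟨aN+2, by omega, n, hn, hzev⟩, ?_⟩
    rw [Real.dist_eq, abs_lt]
    constructor
    · have := hz.2; simp only [hs₀def] at this ⊢; linarith
    · have := hz.1; linarith
  exact fun y hy => closure_minimal hope isClosed_closure (by rw [closure_Iio]; exact hy)
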